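/- Let σ>0, C>0 and A ∈ ℝ with A+C>0, and set ρ_{L,0} = 1 − C/√L, ρ_{L,1} = 1 − A/√L. Let I_L = (1/(2π)) ∫_{−2}^{2} (σ+x)^L √(4−x²) / [(1 − xρ_{L,0} + ρ_{L,0}²)(1 − xρ_{L,1} + ρ_{L,1}²)] dx. Then lim_{L→∞} I_L / ((2+σ)^L √L) = (2/π) ∫_0^∞ u² e^{−u²/(2+σ)} / [(C² + u²)(A² + u²)] du. -/

import Mathlib

open MeasureTheory Real Filter Finset Topology

noncomputable section

set_option maxHeartbeats 2000000

/-- Transformed integrand after the substitution `x = 2 - u²/L`. -/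
noncomputable def s6G (σ A C : ℝ) (L : ℕ) (u : ℝ) : ℝ :=
  ((1 - u ^ 2 / ((2 + σ) * L)) ^ L * Real.sqrt (4 - u ^ 2 / L) * (2 * u ^ 2)) /
    ((C ^ 2 + (1 - C / Real.sqrt L) * u ^ 2) * (A ^ 2 + (1 - A / Real.sqrt L) * u ^ 2))

/-- Original integrand. -/
noncomputable def s6f (σ A C : ℝ) (L : ℕ) (x : ℝ) : ℝ :=
  (σ + x) ^ L * Real.sqrt (4 - x ^ 2) /
    ((1 - x * (1 - C / Real.sqrt L) + (1 - C / Real.sqrt L) ^ 2) *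
      (1 - x * (1 - A / Real.sqrt L) + (1 - A / Real.sqrt L) ^ 2))

lemma s6image (L : ℕ) (hL : 1 ≤ L) :
    (fun u : ℝ => 2 - u ^ 2 / L) '' Set.Ioo 0 (2 * Real.sqrt L) = Set.Ioo (-2 : ℝ) 2 := by
  have hL0 : (0 : ℝ) < L := by exact_mod_cast hL
  have hsq : Real.sqrt L ^ 2 = L := Real.sq_sqrt (le_of_lt hL0)
  ext x
  constructor
  · rintro ⟨u, ⟨hu0, hu2⟩, rfl⟩
    have h1 : u ^ 2 < 4 * L := by
      have : u ^ 2 < (2 * Real.sqrt L) ^ 2 := by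
        apply pow_lt_pow_left₀ hu2 hu0.le
        norm_num
      nlinarith [hsq]
    constructor
    · have : u ^ 2 / L < 4 := by
        rw [div_lt_iff₀ hL0]; linarith
      linarith
    · have : 0 < u ^ 2 / L := by positivity
      linarith
  · rintro ⟨hx1, hx2⟩
    refine ⟨Real.sqrt (L * (2 - x)), ⟨?_, ?_⟩, ?_⟩
    · apply Real.sqrt_pos.2; nlinarith
    · have h4 : Real.sqrt (L * (2 - x)) < Real.sqrt (L * 4) := by
        apply Real.sqrt_lt_sqrt (by nlinarith); nlinarith
      have : Real.sqrt ((L : ℝ) * 4) = 2 * Real.sqrt L := by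
        rw [show (L : ℝ) * 4 = (2 * Real.sqrt L)^2 by nlinarith [hsq]]
        rw [Real.sqrt_sq (by positivity)]
      linarith [this ▸ h4]
    · show 2 - Real.sqrt ((L:ℝ) * (2 - x)) ^ 2 / L = x
      rw [Real.sq_sqrt (by nlinarith : (0:ℝ) ≤ (L : ℝ) * (2 - x))]
      field_simp
      ring

lemma s6key (σ A C : ℝ) (hσ : 0 < σ) (L : ℕ) (hL : 1 ≤ L)
    (hC : 0 < C) (hCs : C < Real.sqrt L) (hAs : A < Real.sqrt L)
    {u : ℝ} (hu : u ∈ Set.Ioo (0:ℝ) (2 * Real.sqrt L)) :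
    (2 * u / L) * s6f σ A C L (2 - u ^ 2 / L) = (2 + σ) ^ L * Real.sqrt L * s6G σ A C L u := by
  obtain ⟨hu0, hu2⟩ := hu
  have hL0 : (0 : ℝ) < L := by exact_mod_cast hL
  set s := Real.sqrt (L : ℝ) with hsdef
  have hs0 : 0 < s := Real.sqrt_pos.2 hL0
  have hs2 : s ^ 2 = L := Real.sq_sqrt hL0.le
  have hu4 : u ^ 2 < 4 * L := by nlinarith [hs2]
  have ht4 : u ^ 2 / L < 4 := by rw [div_lt_iff₀ hL0]; linarith
  have hsqrt : Real.sqrt (4 - (2 - u ^ 2 / L) ^ 2) = (u / s) * Real.sqrt (4 - u ^ 2 / L) := by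
    have h1 : 4 - (2 - u ^ 2 / (L:ℝ)) ^ 2 = (u ^ 2 / L) * (4 - u ^ 2 / L) := by ring
    rw [h1, Real.sqrt_mul (by positivity)]
    congr 1
    rw [show u ^ 2 / (L:ℝ) = (u / s) ^ 2 by rw [div_pow, hs2], Real.sqrt_sq (by positivity)]
  have hpow : (σ + (2 - u ^ 2 / L)) ^ L = (2 + σ) ^ L * (1 - u ^ 2 / ((2 + σ) * L)) ^ L := by
    rw [← mul_pow]
    congr 1
    have h2σ : (2 + σ) ≠ 0 := by positivity
    field_simp
    ring
  have hd : ∀ c : ℝ, 1 - (2 - u ^ 2 / L) * (1 - c / s) + (1 - c / s) ^ 2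
      = (c ^ 2 + (1 - c / s) * u ^ 2) / L := by
    intro c
    rw [← hs2]
    field_simp
    ring
  have hE1 : 0 < C ^ 2 + (1 - C / s) * u ^ 2 := by
    have : 0 < 1 - C / s := by rw [sub_pos, div_lt_one hs0]; exact hCs
    positivity
  have hE2 : 0 < A ^ 2 + (1 - A / s) * u ^ 2 := by
    have h : 0 < 1 - A / s := by rw [sub_pos, div_lt_one hs0]; exact hAs
    have := mul_pos h (by positivity : (0:ℝ) < u ^ 2)
    nlinarith [sq_nonneg A]
  rw [s6f, s6G, hsqrt, hpow, hd C, hd A, ← hsdef, ← hs2, div_mul_div_comm,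
    show s ^ 2 * ((C ^ 2 + (1 - C / s) * u ^ 2) / s ^ 2 * ((A ^ 2 + (1 - A / s) * u ^ 2) / s ^ 2))
        = (C ^ 2 + (1 - C / s) * u ^ 2) * (A ^ 2 + (1 - A / s) * u ^ 2) / s ^ 2 by
      field_simp,
    div_div_eq_mul_div]
  rw [← mul_div_assoc ((2 + σ) ^ L * s)]
  rw [div_eq_div_iff (by positivity : ((C ^ 2 + (1 - C / s) * u ^ 2) * (A ^ 2 + (1 - A / s) * u ^ 2) : ℝ) ≠ 0)
    (by positivity : ((C ^ 2 + (1 - C / s) * u ^ 2) * (A ^ 2 + (1 - A / s) * u ^ 2) : ℝ) ≠ 0)]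
  field_simp

lemma s6subst (σ A C : ℝ) (L : ℕ) (hL : 1 ≤ L) :
    ∫ x in Set.Ioo (-2:ℝ) 2, s6f σ A C L x
      = ∫ u in Set.Ioo (0:ℝ) (2 * Real.sqrt L),
          (2 * u / L) * s6f σ A C L (2 - u ^ 2 / L) := by
  have hL0 : (0 : ℝ) < L := by exact_mod_cast hL
  rw [← s6image L hL]
  rw [integral_image_eq_integral_abs_deriv_smul measurableSet_Ioo
    (f' := fun u => -(2 * u / L))
    (fun x _ => by
      have h := ((hasDerivAt_pow 2 x).div_const (L : ℝ)).const_sub 2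
      have h2 : HasDerivAt (fun u : ℝ => 2 - u ^ 2 / L) (-(2 * x / L)) x := by
        refine h.congr_deriv ?_
        push_cast
        ring
      exact h2.hasDerivWithinAt)
    (fun a ha b hb hab => by
      simp only [sub_right_inj] at hab
      have : a ^ 2 = b ^ 2 := by
        field_simp at hab
        exact hab
      rw [← Real.sqrt_sq ha.1.le, ← Real.sqrt_sq hb.1.le, this])
    (s6f σ A C L)]
  apply setIntegral_congr_fun measurableSet_Ioo
  intro u hu
  have h : |(-(2 * u / (L:ℝ)))| = 2 * u / L := by
    rw [abs_neg, abs_of_nonneg]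
    have := hu.1
    positivity
  simp only [smul_eq_mul, h]

lemma s6powbound (σ : ℝ) (hσ : 0 < σ) : ∃ δ : ℝ, 0 < δ ∧ δ ≤ 1 / (2 + σ) ∧
    ∀ (L : ℕ), 1 ≤ L → ∀ u : ℝ, 0 < u → u < 2 * Real.sqrt L →
    |1 - u ^ 2 / ((2 + σ) * L)| ^ L ≤ Real.exp (-δ * u ^ 2) := by
  have h2σ : (0:ℝ) < 2 + σ := by linarith
  set r : ℝ := max ((2 - σ) / (2 + σ)) (1 / 2) with hrdef
  have hr0 : (0:ℝ) < r := lt_of_lt_of_le (by norm_num) (le_max_right _ _)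
  have hr1 : r < 1 := by
    apply max_lt _ (by norm_num)
    rw [div_lt_one h2σ]; linarith
  have hlog : Real.log r < 0 := Real.log_neg hr0 hr1
  refine ⟨min (1 / (2 + σ)) (-Real.log r / 4), ?_, min_le_left _ _, ?_⟩
  · apply lt_min (by positivity); linarith
  intro L hL u hu0 hu2
  set δ := min (1 / (2 + σ)) (-Real.log r / 4) with hδdef
  have hδ1 : δ ≤ 1 / (2 + σ) := min_le_left _ _
  have hδ2 : δ ≤ -Real.log r / 4 := min_le_right _ _
  have hL0 : (0:ℝ) < L := by exact_mod_cast hL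
  have hs2 : Real.sqrt L ^ 2 = (L:ℝ) := Real.sq_sqrt hL0.le
  have hu4 : u ^ 2 < 4 * L := by nlinarith [hs2, Real.sqrt_nonneg (L:ℝ)]
  set q : ℝ := u ^ 2 / ((2 + σ) * L) with hqdef
  have hq0 : 0 < q := by positivity
  have hqL : (L:ℝ) * q = u ^ 2 / (2 + σ) := by
    rw [hqdef]; field_simp
  have hq4 : q < 4 / (2 + σ) := by
    rw [hqdef, div_lt_div_iff₀ (by positivity) h2σ]
    nlinarith
  rcases le_or_gt q 1 with hq | hq
  · have habs : |1 - q| = 1 - q := abs_of_nonneg (by linarith)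
    rw [habs]
    calc (1 - q) ^ L ≤ Real.exp (-q) ^ L := by
          apply pow_le_pow_left₀ (by linarith)
          linarith [Real.add_one_le_exp (-q)]
      _ = Real.exp ((L:ℝ) * (-q)) := by rw [← Real.exp_nat_mul]
      _ ≤ Real.exp (-δ * u ^ 2) := by
          apply Real.exp_le_exp.2
          have : (L:ℝ) * (-q) = -(u ^ 2 / (2 + σ)) := by rw [mul_neg, hqL]
          rw [this]
          have key : δ * u ^ 2 ≤ 1 / (2 + σ) * u ^ 2 :=
            mul_le_mul_of_nonneg_right hδ1 (sq_nonneg u)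
          have h9 : 1 / (2 + σ) * u ^ 2 = u ^ 2 / (2 + σ) := by ring
          linarith
  · have habs : |1 - q| = q - 1 := by rw [abs_of_nonpos (by linarith)]; ring
    rw [habs]
    have hqr : q - 1 ≤ r := by
      have : q - 1 < (2 - σ) / (2 + σ) := by
        rw [lt_div_iff₀ h2σ]
        rw [lt_div_iff₀ h2σ] at hq4
        nlinarith
      exact le_trans this.le (le_max_left _ _)
    calc (q - 1) ^ L ≤ r ^ L := pow_le_pow_left₀ (by linarith) hqr L
      _ = Real.exp ((L:ℝ) * Real.log r) := by rw [Real.exp_nat_mul, Real.exp_log hr0]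
      _ ≤ Real.exp (-δ * u ^ 2) := by
          apply Real.exp_le_exp.2
          have hL4 : u ^ 2 / 4 ≤ (L:ℝ) := by linarith
          have h1 : (L:ℝ) * Real.log r ≤ (u ^ 2 / 4) * Real.log r :=
            mul_le_mul_of_nonpos_right hL4 hlog.le
          have h2 : (u ^ 2 / 4) * Real.log r ≤ -δ * u ^ 2 := by
            nlinarith [sq_nonneg u]
          linarith

lemma s6Glim (σ A C : ℝ) (hσ : 0 < σ) (hC : 0 < C) (u : ℝ) (hu0 : 0 < u) :
    Tendsto (fun L : ℕ => s6G σ A C L u) atTop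
      (𝓝 (Real.exp (-(u ^ 2 / (2 + σ))) * 2 * (2 * u ^ 2) /
        ((C ^ 2 + u ^ 2) * (A ^ 2 + u ^ 2)))) := by
  have hsL : Tendsto (fun L : ℕ => Real.sqrt L) atTop atTop := by
    have h := (tendsto_rpow_atTop (by norm_num : (0:ℝ) < 1/2)).comp tendsto_natCast_atTop_atTop
    exact h.congr fun L => (Real.sqrt_eq_rpow _).symm
  have hq : Tendsto (fun L : ℕ => (1 - u ^ 2 / ((2 + σ) * L)) ^ L) atTop
      (𝓝 (Real.exp (-(u ^ 2 / (2 + σ))))) := by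
    have h := Real.tendsto_one_add_div_pow_exp (-(u ^ 2 / (2 + σ)))
    exact h.congr fun L => by rw [← div_div]; congr 1; ring
  have hT : Tendsto (fun L : ℕ => Real.sqrt (4 - u ^ 2 / L)) atTop (𝓝 2) := by
    have h0 : Tendsto (fun L : ℕ => 4 - u ^ 2 / (L:ℝ)) atTop (𝓝 4) := by
      simpa using tendsto_const_nhds.sub (tendsto_const_div_atTop_nhds_zero_nat (u ^ 2))
    have h := (Real.continuous_sqrt.tendsto 4).comp h0
    have h4 : Real.sqrt 4 = 2 := by
      rw [show (4:ℝ) = 2 ^ 2 by norm_num, Real.sqrt_sq (by norm_num)]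
    rw [← h4]
    exact h
  have hE : ∀ c : ℝ, Tendsto (fun L : ℕ => c ^ 2 + (1 - c / Real.sqrt L) * u ^ 2) atTop
      (𝓝 (c ^ 2 + u ^ 2)) := by
    intro c
    have hc0 : Tendsto (fun L : ℕ => c / Real.sqrt L) atTop (𝓝 0) :=
      Tendsto.div_atTop tendsto_const_nhds hsL
    have h1 : Tendsto (fun L : ℕ => (1 - c / Real.sqrt L) * u ^ 2) atTop (𝓝 ((1 - 0) * u ^ 2)) :=
      (tendsto_const_nhds.sub hc0).mul tendsto_const_nhds
    have h2 : Tendsto (fun L : ℕ => c ^ 2 + (1 - c / Real.sqrt L) * u ^ 2) atTop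
        (𝓝 (c ^ 2 + (1 - 0) * u ^ 2)) := tendsto_const_nhds.add h1
    simpa using h2
  have hne : (C ^ 2 + u ^ 2) * (A ^ 2 + u ^ 2) ≠ 0 := by positivity
  have := Tendsto.div (Tendsto.mul (hq.mul hT) (tendsto_const_nhds (x := 2 * u ^ 2)))
    ((hE C).mul (hE A)) hne
  refine this.congr fun L => ?_
  rw [s6G]
  rfl

/-- Asymptotics of the continuous part `I_L` of the normalizing constant:
`I_L / ((2+σ)^L √L) → (2/π) ∫₀^∞ u² e^{−u²/(2+σ)} / ((C²+u²)(A²+u²)) du`. -/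
theorem statement6 (σ A C : ℝ) (hσ : 0 < σ) (hC : 0 < C) (hAC : 0 < A + C) :
    Tendsto
      (fun L : ℕ =>
        ((1 / (2 * Real.pi)) *
            ∫ x in (-2 : ℝ)..2,
              (σ + x) ^ L * Real.sqrt (4 - x ^ 2) /
                ((1 - x * (1 - C / Real.sqrt L) + (1 - C / Real.sqrt L) ^ 2) *
                  (1 - x * (1 - A / Real.sqrt L) + (1 - A / Real.sqrt L) ^ 2))) /
          ((2 + σ) ^ L * Real.sqrt L))
      atTop
      (𝓝 ((2 / Real.pi) *
        ∫ u in Set.Ioi (0 : ℝ),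
          u ^ 2 * Real.exp (-u ^ 2 / (2 + σ)) / ((C ^ 2 + u ^ 2) * (A ^ 2 + u ^ 2)))) := by
  have h2σ : (0:ℝ) < 2 + σ := by linarith
  obtain ⟨δ, hδ0, hδσ, hδbound⟩ := s6powbound σ hσ
  have hsL : Tendsto (fun L : ℕ => Real.sqrt L) atTop atTop := by
    have h := (tendsto_rpow_atTop (by norm_num : (0:ℝ) < 1/2)).comp tendsto_natCast_atTop_atTop
    exact h.congr fun L => (Real.sqrt_eq_rpow _).symm
  set FF : ℕ → ℝ → ℝ := fun L => (Set.Ioo (0:ℝ) (2 * Real.sqrt L)).indicator (s6G σ A C L)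
    with hFF
  set flim : ℝ → ℝ := fun u =>
    Real.exp (-(u ^ 2 / (2 + σ))) * 2 * (2 * u ^ 2) / ((C ^ 2 + u ^ 2) * (A ^ 2 + u ^ 2))
    with hflim
  have hmain : Tendsto (fun L : ℕ => ∫ u in Set.Ioi (0:ℝ), FF L u) atTop
      (𝓝 (∫ u in Set.Ioi (0:ℝ), flim u)) := by
    apply tendsto_integral_filter_of_dominated_convergence
      (bound := fun u => (16 / C ^ 2) * Real.exp (-δ * u ^ 2))
    · filter_upwards with L
      apply Measurable.aestronglyMeasurable
      apply Measurable.indicator _ measurableSet_Ioo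
      unfold s6G
      fun_prop
    · filter_upwards [(eventually_ge_atTop 1).and
        (hsL.eventually_ge_atTop (2 * |C| + 2 * |A| + 1))] with L hL
      obtain ⟨hL1, hLs⟩ := hL
      filter_upwards with u
      by_cases hu : u ∈ Set.Ioo (0:ℝ) (2 * Real.sqrt L)
      · simp only [hFF, Set.indicator_of_mem hu]
        obtain ⟨hu0, hu2⟩ := hu
        have hs0 : (0:ℝ) < Real.sqrt L := by
          have := abs_nonneg C; have := abs_nonneg A; linarith
        have hL0 : (0:ℝ) < L := by exact_mod_cast hL1
        have haC := abs_nonneg C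
        have haA := abs_nonneg A
        have hrC : C / Real.sqrt L ≤ 1/2 := by
          rw [div_le_iff₀ hs0]
          calc C ≤ |C| := le_abs_self C
            _ ≤ 1/2 * Real.sqrt L := by linarith
        have hrA : A / Real.sqrt L ≤ 1/2 := by
          rw [div_le_iff₀ hs0]
          calc A ≤ |A| := le_abs_self A
            _ ≤ 1/2 * Real.sqrt L := by linarith
        have hρC : (1:ℝ)/2 ≤ 1 - C / Real.sqrt L := by linarith
        have hρA : (1:ℝ)/2 ≤ 1 - A / Real.sqrt L := by linarith
        have hE1 : C ^ 2 ≤ C ^ 2 + (1 - C / Real.sqrt L) * u ^ 2 := by nlinarith [sq_nonneg u]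
        have hE2 : u ^ 2 / 2 ≤ A ^ 2 + (1 - A / Real.sqrt L) * u ^ 2 := by
          nlinarith [sq_nonneg A, sq_nonneg u]
        have hQ : |(1 - u ^ 2 / ((2 + σ) * (L:ℝ))) ^ L| ≤ Real.exp (-δ * u ^ 2) := by
          rw [abs_pow]; exact hδbound L hL1 u hu0 hu2
        have hT2 : Real.sqrt (4 - u ^ 2 / L) ≤ 2 := by
          calc Real.sqrt (4 - u ^ 2 / L) ≤ Real.sqrt 4 := by
                apply Real.sqrt_le_sqrt
                have h9 : (0:ℝ) ≤ u ^ 2 / L := by positivity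
                linarith
            _ = 2 := by rw [show (4:ℝ) = 2 ^ 2 by norm_num, Real.sqrt_sq (by norm_num)]
        have hE1p : (0:ℝ) < C ^ 2 + (1 - C / Real.sqrt L) * u ^ 2 :=
          lt_of_lt_of_le (by positivity) hE1
        have hE2p : (0:ℝ) < A ^ 2 + (1 - A / Real.sqrt L) * u ^ 2 :=
          lt_of_lt_of_le (by positivity) hE2
        have hEpos := mul_pos hE1p hE2p
        rw [Real.norm_eq_abs, s6G, abs_div, abs_mul, abs_mul,
          abs_of_nonneg (Real.sqrt_nonneg _), abs_of_nonneg (by positivity : (0:ℝ) ≤ 2 * u ^ 2),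
          abs_of_pos hEpos]
        calc |(1 - u ^ 2 / ((2 + σ) * (L:ℝ))) ^ L| * Real.sqrt (4 - u ^ 2 / L) * (2 * u ^ 2) /
              ((C ^ 2 + (1 - C / Real.sqrt L) * u ^ 2) * (A ^ 2 + (1 - A / Real.sqrt L) * u ^ 2))
            ≤ (Real.exp (-δ * u ^ 2) * 2 * (2 * u ^ 2)) / (C ^ 2 * (u ^ 2 / 2)) := by
              apply div_le_div₀ (by positivity) ?_ (by positivity) ?_
              · exact mul_le_mul
                  (mul_le_mul hQ hT2 (Real.sqrt_nonneg _) (Real.exp_pos _).le)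
                  le_rfl (by positivity) (by positivity)
              · exact mul_le_mul hE1 hE2 (by positivity) (by nlinarith)
          _ = 8 / C ^ 2 * Real.exp (-δ * u ^ 2) := by field_simp; ring
          _ ≤ 16 / C ^ 2 * Real.exp (-δ * u ^ 2) := by
              apply mul_le_mul_of_nonneg_right _ (Real.exp_pos _).le
              apply (div_le_div_iff_of_pos_right (by positivity)).2
              norm_num
      · simp only [hFF, Set.indicator_of_notMem hu, norm_zero]
        positivity
    · exact ((integrable_exp_neg_mul_sq hδ0).const_mul _).restrict
    · filter_upwards [ae_restrict_mem measurableSet_Ioi] with u hu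
      have hu0 : 0 < u := hu
      have hev : ∀ᶠ L : ℕ in atTop, FF L u = s6G σ A C L u := by
        filter_upwards [hsL.eventually_gt_atTop (u/2)] with L hL
        have h2 : u < 2 * Real.sqrt L := by linarith
        exact Set.indicator_of_mem (Set.mem_Ioo.mpr ⟨hu0, h2⟩) _
      exact (s6Glim σ A C hσ hC u hu0).congr' (hev.mono fun L h => h.symm)
  have hev : ∀ᶠ L : ℕ in atTop,
      (1 / (2 * Real.pi)) * (∫ u in Set.Ioi (0:ℝ), FF L u) =
        ((1 / (2 * Real.pi)) *
            ∫ x in (-2 : ℝ)..2,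
              (σ + x) ^ L * Real.sqrt (4 - x ^ 2) /
                ((1 - x * (1 - C / Real.sqrt L) + (1 - C / Real.sqrt L) ^ 2) *
                  (1 - x * (1 - A / Real.sqrt L) + (1 - A / Real.sqrt L) ^ 2))) /
          ((2 + σ) ^ L * Real.sqrt L) := by
    filter_upwards [(eventually_ge_atTop 1).and
      ((hsL.eventually_gt_atTop C).and (hsL.eventually_gt_atTop A))] with L hL
    obtain ⟨hL1, hCs, hAs⟩ := hL
    have hs0 : (0:ℝ) < Real.sqrt L := lt_trans hC hCs
    have e1 : (∫ x in (-2:ℝ)..2,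
        (σ + x) ^ L * Real.sqrt (4 - x ^ 2) /
          ((1 - x * (1 - C / Real.sqrt L) + (1 - C / Real.sqrt L) ^ 2) *
            (1 - x * (1 - A / Real.sqrt L) + (1 - A / Real.sqrt L) ^ 2)))
        = ∫ x in Set.Ioo (-2:ℝ) 2, s6f σ A C L x := by
      rw [intervalIntegral.integral_of_le (by norm_num : (-2:ℝ) ≤ 2),
        integral_Ioc_eq_integral_Ioo]
      rfl
    have e3 : ∫ u in Set.Ioo (0:ℝ) (2 * Real.sqrt L),
          (2 * u / L) * s6f σ A C L (2 - u ^ 2 / L)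
        = ∫ u in Set.Ioo (0:ℝ) (2 * Real.sqrt L),
            (2 + σ) ^ L * Real.sqrt L * s6G σ A C L u :=
      setIntegral_congr_fun measurableSet_Ioo fun u hu => s6key σ A C hσ L hL1 hC hCs hAs hu
    have e5 : (∫ u in Set.Ioi (0:ℝ), FF L u)
        = ∫ u in Set.Ioo (0:ℝ) (2 * Real.sqrt L), s6G σ A C L u := by
      simp only [hFF]
      rw [integral_indicator measurableSet_Ioo, Measure.restrict_restrict measurableSet_Ioo,
        Set.inter_eq_self_of_subset_left Set.Ioo_subset_Ioi_self]
    rw [e1, s6subst σ A C L hL1, e3, MeasureTheory.integral_const_mul, e5]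
    have hK : ((2 + σ) ^ L * Real.sqrt L : ℝ) ≠ 0 := by positivity
    rw [show (1 / (2 * Real.pi)) *
          ((2 + σ) ^ L * Real.sqrt L * ∫ u in Set.Ioo (0:ℝ) (2 * Real.sqrt L), s6G σ A C L u)
        = ((2 + σ) ^ L * Real.sqrt L) *
          ((1 / (2 * Real.pi)) * ∫ u in Set.Ioo (0:ℝ) (2 * Real.sqrt L), s6G σ A C L u) by ring,
      mul_div_cancel_left₀ _ hK]
  have hval : (1 / (2 * Real.pi)) * (∫ u in Set.Ioi (0:ℝ), flim u)
      = (2 / Real.pi) * ∫ u in Set.Ioi (0:ℝ),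
          u ^ 2 * Real.exp (-u ^ 2 / (2 + σ)) / ((C ^ 2 + u ^ 2) * (A ^ 2 + u ^ 2)) := by
    have hpt : flim = fun u =>
        4 * (u ^ 2 * Real.exp (-u ^ 2 / (2 + σ)) / ((C ^ 2 + u ^ 2) * (A ^ 2 + u ^ 2))) := by
      funext u
      rw [hflim, neg_div]
      ring
    simp only [hpt]
    rw [MeasureTheory.integral_const_mul]
    have hπ : Real.pi ≠ 0 := Real.pi_ne_zero
    field_simp
    ring
  have hfin := hmain.const_mul (1 / (2 * Real.pi))
  rw [hval] at hfin
  exact hfin.congr' hev
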